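/- Let X be a nonempty closed L-pseudo-Lipschitz subset of the pseudo-Euclidean space ℝ_{(l,p)} with L < 1. Then for every a ∈ ℝ^n the set m(a) is nonempty and compact; in particular the vacant axis W_X is empty. -/

import Mathlib

/-!
For `x, y ∈ X` the pseudo-Lipschitz bound `‖x - y‖_p ≤ L ‖x - y‖_l` with `0 ≤ L < 1` (replace `L`
by `max L 0`) gives `Q (x - y) ≥ c ‖x - y‖²` with `c = (1 - L²) / (1 + L²) > 0`. Hence
`x ↦ Q (x - a)` is coercive on `X`: around a fixed `x₀ ∈ X` it equals `Q (x - x₀)` plus a term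
linear in `‖x - x₀‖`. Its sublevel sets in the closed set `X` are therefore compact, so it attains
its minimum, and `m(a)`, the closed set of minimizers, lies in one of these sublevel sets.
-/

open Filter Topology Set

noncomputable section

/-- The pseudo-Euclidean space `ℝ_{(l,p)}`: `ℝ^(l+p)` with the Euclidean topology. -/
abbrev PE (l p : ℕ) := EuclideanSpace ℝ (Fin (l + p))

/-- The quadratic form `Q(x) = ‖x‖_l² − ‖x‖_p²`. -/
def Q (l p : ℕ) (x : PE l p) : ℝ :=
  ∑ i : Fin (l + p), if (i : ℕ) < l then (x i) ^ 2 else -((x i) ^ 2)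

/-- The pseudo-scalar product `⟪x,y⟫ = Σ_{i<l} x_i y_i − Σ_{i≥l} x_i y_i`. -/
def pseudoInner (l p : ℕ) (x y : PE l p) : ℝ :=
  ∑ i : Fin (l + p), if (i : ℕ) < l then x i * y i else -(x i * y i)

/-- `‖x‖_l`: the Euclidean norm of the first `l` coordinates. -/
def normL (l p : ℕ) (x : PE l p) : ℝ :=
  Real.sqrt (∑ i : Fin (l + p), if (i : ℕ) < l then (x i) ^ 2 else 0)

/-- `‖x‖_p`: the Euclidean norm of the last `p` coordinates. -/
def normP (l p : ℕ) (x : PE l p) : ℝ :=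
  Real.sqrt (∑ i : Fin (l + p), if (i : ℕ) < l then 0 else (x i) ^ 2)

/-- `X` is acausal: `Q(x−y) > 0` for all distinct `x, y ∈ X`. -/
def Acausal (l p : ℕ) (X : Set (PE l p)) : Prop :=
  ∀ x ∈ X, ∀ y ∈ X, x ≠ y → 0 < Q l p (x - y)

/-- `X` is `L`-pseudo-Lipschitz: `L‖x−y‖_l ≥ ‖x−y‖_p` for all `x, y ∈ X`. -/
def PseudoLipschitz (l p : ℕ) (L : ℝ) (X : Set (PE l p)) : Prop :=
  ∀ x ∈ X, ∀ y ∈ X, normP l p (x - y) ≤ L * normL l p (x - y)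

/-- The squared-distance function `ρ(a,X) = inf {Q(x−a) : x ∈ X}`. -/
def rho (l p : ℕ) (X : Set (PE l p)) (a : PE l p) : ℝ :=
  sInf ((fun x => Q l p (x - a)) '' X)

/-- The set of closest points `m(a) = {x ∈ X : Q(x−a) = ρ(a,X)}`, via its equivalent
description `m(a) = {x ∈ X : ∀ b ∈ X, Q(x−a) ≤ Q(b−a)}`. -/
def mm (l p : ℕ) (X : Set (PE l p)) (a : PE l p) : Set (PE l p) :=
  {x ∈ X | ∀ b ∈ X, Q l p (x - a) ≤ Q l p (b - a)}

/-- The medial axis `M_X`: points with at least two closest points in `X`. -/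
def medialAxis (l p : ℕ) (X : Set (PE l p)) : Set (PE l p) :=
  {a | (mm l p X a).Nontrivial}

/-- The vacant axis `W_X`: points with no closest point in `X`. -/
def vacantAxis (l p : ℕ) (X : Set (PE l p)) : Set (PE l p) :=
  {a | mm l p X a = ∅}

/-- The normal set `N(a) = {x : a ∈ m(x)}`. -/
def NN (l p : ℕ) (X : Set (PE l p)) (a : PE l p) : Set (PE l p) :=
  {x | a ∈ mm l p X x}

/-- The strict normal set `N'(a) = {x : m(x) = {a}}`. -/
def NN' (l p : ℕ) (X : Set (PE l p)) (a : PE l p) : Set (PE l p) :=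
  {x | mm l p X x = {a}}

section PseudoEuclidean

variable {l p : ℕ}

lemma Q_add (u v : PE l p) :
    Q l p (u + v) = Q l p u + 2 * pseudoInner l p u v + Q l p v := by
  simp only [Q, pseudoInner, PiLp.add_apply, Finset.mul_sum, ← Finset.sum_add_distrib]
  exact Finset.sum_congr rfl fun i _ => by split_ifs <;> ring

lemma continuous_Q : Continuous (Q l p) :=
  continuous_finsetSum _ fun i _ => by split_ifs <;> fun_prop

lemma abs_pseudoInner_le (u v : PE l p) : |pseudoInner l p u v| ≤ ‖u‖ * ‖v‖ := by
  set σ : Fin (l + p) → ℝ := fun i => if (i : ℕ) < l then 1 else -1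
  have hnorm (w : PE l p) : ‖w‖ ^ 2 = ∑ i, w i ^ 2 := by
    simp only [EuclideanSpace.norm_sq_eq, Real.norm_eq_abs, sq_abs]
  have hinner : pseudoInner l p u v = ∑ i, (σ i * u i) * v i :=
    Finset.sum_congr rfl fun i _ => by simp only [σ]; split_ifs <;> ring
  have hnorm_signed : ‖u‖ ^ 2 = ∑ i, (σ i * u i) ^ 2 := by
    rw [hnorm]
    exact Finset.sum_congr rfl fun i _ => by simp only [σ]; split_ifs <;> ring
  refine abs_le_of_sq_le_sq ?_ (by positivity)
  rw [mul_pow, hnorm_signed, hnorm, hinner]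
  exact Finset.sum_mul_sq_le_sq_mul_sq _ _ _

lemma normL_sq (x : PE l p) :
    normL l p x ^ 2 = ∑ i : Fin (l + p), if (i : ℕ) < l then x i ^ 2 else 0 :=
  Real.sq_sqrt <| Finset.sum_nonneg fun i _ => by split_ifs <;> positivity

lemma normP_sq (x : PE l p) :
    normP l p x ^ 2 = ∑ i : Fin (l + p), if (i : ℕ) < l then 0 else x i ^ 2 :=
  Real.sq_sqrt <| Finset.sum_nonneg fun i _ => by split_ifs <;> positivity

lemma Q_eq_normL_sq_sub_normP_sq (x : PE l p) :
    Q l p x = normL l p x ^ 2 - normP l p x ^ 2 := by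
  rw [Q, normL_sq, normP_sq, ← Finset.sum_sub_distrib]
  exact Finset.sum_congr rfl fun i _ => by split_ifs <;> ring

lemma norm_sq_eq_normL_sq_add_normP_sq (x : PE l p) :
    ‖x‖ ^ 2 = normL l p x ^ 2 + normP l p x ^ 2 := by
  rw [EuclideanSpace.norm_sq_eq, normL_sq, normP_sq, ← Finset.sum_add_distrib]
  exact Finset.sum_congr rfl fun i _ => by rw [Real.norm_eq_abs, sq_abs]; split_ifs <;> ring

lemma PseudoLipschitz.mono {L L' : ℝ} {X : Set (PE l p)} (h : PseudoLipschitz l p L X)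
    (hLL' : L ≤ L') : PseudoLipschitz l p L' X := fun x hx y hy =>
  (h x hx y hy).trans (mul_le_mul_of_nonneg_right hLL' (Real.sqrt_nonneg _))

/-- The constant is sharp: equality holds when `‖x - y‖_p = L ‖x - y‖_l`. -/
lemma PseudoLipschitz.mul_norm_sq_le_Q {L : ℝ} {X : Set (PE l p)}
    (h : PseudoLipschitz l p L X) {x y : PE l p} (hx : x ∈ X) (hy : y ∈ X) :
    (1 - L ^ 2) / (1 + L ^ 2) * ‖x - y‖ ^ 2 ≤ Q l p (x - y) := by
  have hsq : normP l p (x - y) ^ 2 ≤ L ^ 2 * normL l p (x - y) ^ 2 := by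
    rw [← mul_pow]
    exact pow_le_pow_left₀ (Real.sqrt_nonneg _) (h x hx y hy) 2
  rw [div_mul_eq_mul_div, div_le_iff₀ (by positivity), Q_eq_normL_sq_sub_normP_sq,
    norm_sq_eq_normL_sq_add_normP_sq]
  linarith

/-- Expanding `Q (x - a)` around `x₀`, the cross term is only linear in `‖x - x₀‖` while
`Q (x - x₀)` grows quadratically. -/
lemma norm_sub_le_of_Q_sub_le {c : ℝ} (hc : 0 < c) {x x₀ a : PE l p}
    (hcoer : c * ‖x - x₀‖ ^ 2 ≤ Q l p (x - x₀)) (hle : Q l p (x - a) ≤ Q l p (x₀ - a)) :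
    ‖x - x₀‖ ≤ 2 * ‖x₀ - a‖ / c := by
  have hexpand := Q_add (x - x₀) (x₀ - a)
  rw [sub_add_sub_cancel] at hexpand
  have hcross := (abs_le.1 (abs_pseudoInner_le (x - x₀) (x₀ - a))).1
  have hquad : c * ‖x - x₀‖ ^ 2 ≤ 2 * ‖x₀ - a‖ * ‖x - x₀‖ := by linarith
  rw [le_div_iff₀ hc]
  rcases (norm_nonneg (x - x₀)).eq_or_lt with h0 | hpos
  · rw [← h0, zero_mul]
    positivity
  · nlinarith

lemma isCompact_setOf_Q_sub_le {X : Set (PE l p)} (hX : IsClosed X) {c : ℝ} (hc : 0 < c)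
    (hcoer : ∀ x ∈ X, ∀ y ∈ X, c * ‖x - y‖ ^ 2 ≤ Q l p (x - y)) (a : PE l p) {x₀ : PE l p}
    (hx₀ : x₀ ∈ X) : IsCompact {x ∈ X | Q l p (x - a) ≤ Q l p (x₀ - a)} := by
  refine Metric.isCompact_of_isClosed_isBounded
    (hX.inter (isClosed_le (continuous_Q.comp (continuous_sub_right a)) continuous_const))
    ((Metric.isBounded_closedBall (x := x₀) (r := 2 * ‖x₀ - a‖ / c)).subset fun x hx => ?_)
  exact mem_closedBall_iff_norm.2 (norm_sub_le_of_Q_sub_le hc (hcoer x hx.1 x₀ hx₀) hx.2)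

end PseudoEuclidean

lemma nonempty_and_isCompact_setOf_forall_le {α β : Type*} [TopologicalSpace α] [LinearOrder β]
    [TopologicalSpace β] [OrderClosedTopology β] {f : α → β} {s : Set α} (hf : Continuous f)
    (hs : IsClosed s) {x₀ : α} (hx₀ : x₀ ∈ s) (hK : IsCompact {x ∈ s | f x ≤ f x₀}) :
    {x ∈ s | ∀ y ∈ s, f x ≤ f y}.Nonempty ∧ IsCompact {x ∈ s | ∀ y ∈ s, f x ≤ f y} := by
  obtain ⟨m, hmK, hmin⟩ := hK.exists_isMinOn ⟨x₀, hx₀, le_rfl⟩ hf.continuousOn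
  have hm : ∀ y ∈ s, f m ≤ f y := fun y hy =>
    (le_total (f y) (f x₀)).elim (fun hy₀ => hmin ⟨hy, hy₀⟩) ((hmin ⟨hx₀, le_rfl⟩).trans)
  have hclosed : IsClosed {x ∈ s | ∀ y ∈ s, f x ≤ f y} := by
    simp only [ofPred_and, ofPred_forall]
    exact hs.inter (isClosed_biInter fun y _ => isClosed_le hf continuous_const)
  exact ⟨⟨m, hmK.1, hm⟩, hK.of_isClosed_subset hclosed fun x hx => ⟨hx.1, hx.2 x₀ hx₀⟩⟩

theorem m_nonempty_compact_general (l p : ℕ) (L : ℝ) (hL : L < 1)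
    (X : Set (PE l p)) (hne : X.Nonempty) (hX : IsClosed X)
    (hlip : PseudoLipschitz l p L X) :
    (∀ a : PE l p, (mm l p X a).Nonempty ∧ IsCompact (mm l p X a)) ∧
    vacantAxis l p X = ∅ := by
  set L' := max L 0
  have hc : 0 < (1 - L' ^ 2) / (1 + L' ^ 2) := by
    have : L' < 1 := max_lt hL one_pos
    have : 0 ≤ L' := le_max_right L 0
    exact div_pos (by nlinarith) (by positivity)
  have hcoer : ∀ x ∈ X, ∀ y ∈ X, (1 - L' ^ 2) / (1 + L' ^ 2) * ‖x - y‖ ^ 2 ≤ Q l p (x - y) :=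
    fun x hx y hy => PseudoLipschitz.mul_norm_sq_le_Q (PseudoLipschitz.mono hlip le_sup_left) hx hy
  obtain ⟨x₀, hx₀⟩ := hne
  have hmm : ∀ a, (mm l p X a).Nonempty ∧ IsCompact (mm l p X a) := fun a =>
    nonempty_and_isCompact_setOf_forall_le (continuous_Q.comp (continuous_sub_right a)) hX hx₀
      (isCompact_setOf_Q_sub_le hX hc hcoer a hx₀)
  exact ⟨hmm, eq_empty_iff_forall_notMem.2 fun a ha => (hmm a).1.ne_empty ha⟩

/-- For nonempty closed `L`-pseudo-Lipschitz `X` with `L < 1`, every `m(a)` is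
nonempty and compact; in particular `W_X = ∅`. -/
theorem m_nonempty_compact (l p : ℕ) (hl : 1 ≤ l) (L : ℝ) (hL : L < 1)
    (X : Set (PE l p)) (hne : X.Nonempty) (hX : IsClosed X)
    (hlip : PseudoLipschitz l p L X) :
    (∀ a : PE l p, (mm l p X a).Nonempty ∧ IsCompact (mm l p X a)) ∧
    vacantAxis l p X = ∅ :=
  m_nonempty_compact_general l p L hL X hne hX hlip
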